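/- For a binary string B of length n-1 representing a line graph configuration under the perfectly alternating edge model, the store-or-advance routing time from node 1 to node n equals 2(n-1) - k(B) - b(B), where k(B) is the number of adjacent bit changes and b(B) is the first bit. -/

import Mathlib

/-- Number of adjacent bit changes k(B) in a binary string. -/
def changes : List Bool → ℕ
  | a :: b :: rest => (if a ≠ b then 1 else 0) + changes (b :: rest)
  | _ => 0

/-- First bit b(B) of a binary string (0 if empty). -/
def firstBit : List Bool → ℕ
  | true :: _ => 1
  | _ => 0

/-- Store-or-advance routing time on the line graph in the perfectly
alternating (1,1)-stochastic model: if the next edge is present the message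
crosses it in one slot (after which every edge flips); otherwise it waits one
slot (every edge flips, so the next edge becomes present and is crossed in a
further slot, after which the remaining edges have flipped twice, i.e. are
back to their original state). -/
def soaTime : List Bool → ℕ
  | [] => 0
  | true :: rest => 1 + soaTime (rest.map not)
  | false :: rest => 2 + soaTime rest
termination_by l => l.length
decreasing_by all_goals simp [List.length_map]

lemma changes_map_not : ∀ l : List Bool, changes (l.map not) = changes l
  | [] => rfl
  | [_] => rfl
  | a :: b :: rest => by
    have ih := changes_map_not (b :: rest)
    simp only [List.map_cons] at ih ⊢
    rw [changes, changes, ih]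
    cases a <;> cases b <;> simp

lemma soaTime_key : ∀ l : List Bool,
    soaTime l + changes l + firstBit l = 2 * l.length := by
  intro l
  induction l using soaTime.induct with
  | case1 => simp [soaTime, changes, firstBit]
  | case2 rest ih =>
    have e : ∀ f : {x // x ∈ rest} → Bool, (∀ x, f x = !x.val) → rest.attach.map f = rest.map not :=
      fun f hf => by rw [← List.attach_map_val (l := rest) (f := not)]; exact List.map_congr_left (fun x _ => hf x)
    rw [e _ (fun x => by rcases x with ⟨x, h⟩; rfl)] at ih
    rw [changes_map_not] at ih
    cases rest with
    | nil => simp [soaTime, changes, firstBit]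
    | cons b r =>
      simp only [List.map_cons, List.length_map] at ih
      cases b <;> simp [soaTime, changes, firstBit, changes_map_not] at ih ⊢ <;> omega
  | case3 rest ih =>
    cases rest with
    | nil => simp [soaTime, changes, firstBit]
    | cons b r =>
      cases b <;> simp [soaTime, changes, firstBit] at ih ⊢ <;> omega

theorem soaTime_eq (n : ℕ) (hn : 2 ≤ n) (B : List Bool)
    (hB : B.length = n - 1) :
    soaTime B = 2 * (n - 1) - changes B - firstBit B := by
  have h := soaTime_key B
  rw [hB] at h
  omega
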